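/- arXiv:2511.18218 — 2 statements merged into one kernel-verified Lean document; each statement's English description precedes it below -/
import Mathlib

section
/- Let k be an algebraically closed field, let 𝔗 be a semisimple pre-Tannakian category over k, and let A be a simple algebra in 𝔗. Then the unit object 𝟙 appears in A with multiplicity one; equivalently, Hom(𝟙, A) is one-dimensional over k. -/
open CategoryTheory CategoryTheory.Limits CategoryTheory.MonoidalCategory

/-!
We work with a pre-Tannakian category over a field `k`: an abelian `k`-linear symmetric
monoidal category with `k`-bilinear tensor product, in which every object has finite
length, all Hom-spaces are finite dimensional over `k`, every object is rigid, and the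
canonical map `k → End 𝟙` is bijective. Algebras are commutative monoid objects.
-/

section
variable {k : Type*} [Field k]
variable {C : Type*} [Category C] [Abelian C] [Linear k C]
  [MonoidalCategory C] [MonoidalPreadditive C] [MonoidalLinear k C]
  [SymmetricCategory C] [RigidCategory C]

/-- `I` is an ideal of the commutative algebra object `A`: the multiplication restricted
to `A ⊗ I` factors through `I`. -/
def IsIdeal (A : CommMon C) (I : Subobject A.X) : Prop :=
  I.Factors ((A.X ◁ I.arrow) ≫ (MonObj.mul (X := A.X)))

/-- A commutative algebra object is simple if it is nonzero and its only ideals are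
the zero ideal and the unit ideal. -/
def IsSimpleAlgebra (A : CommMon C) : Prop :=
  ¬ IsZero A.X ∧ ∀ I : Subobject A.X, IsIdeal A I → I = ⊥ ∨ I = ⊤

/-- The product on `Γ(A) = Hom(𝟙, A)`, given by `x · y = μ ∘ (x ⊗ y) ∘ (unitor)⁻¹`. -/
def gammaMul (A : CommMon C) (x y : 𝟙_ C ⟶ A.X) : 𝟙_ C ⟶ A.X :=
  (λ_ (𝟙_ C)).inv ≫ (x ⊗ₘ y) ≫ (MonObj.mul (X := A.X))

/-- The morphism `A ⟶ Aᘁ` induced by a bilinear form `f : A ⊗ A ⟶ 𝟙`. -/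
noncomputable def pairingHom (A : C) (f : A ⊗ A ⟶ 𝟙_ C) : A ⟶ Aᘁ :=
  (tensorRightHomEquiv A A (Aᘁ) (𝟙_ C)) f ≫ (λ_ (Aᘁ)).hom

/-- A bilinear form `f : A ⊗ A ⟶ 𝟙` is perfect if the induced morphism `A ⟶ Aᘁ`
is an isomorphism. -/
def IsPerfectPairing (A : C) (f : A ⊗ A ⟶ 𝟙_ C) : Prop :=
  IsIso (pairingHom A f)

/-- The trace map `ε_A : A ⟶ 𝟙` of an algebra object: the mate `A ⟶ A ⊗ Aᘁ` of the
multiplication (encoding the action of `A` on itself by multiplication) composed with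
the symmetry and the evaluation. -/
noncomputable def traceMap (A : CommMon C) : A.X ⟶ 𝟙_ C :=
  (tensorRightHomEquiv A.X A.X (A.Xᘁ) A.X) (MonObj.mul (X := A.X)) ≫ (β_ A.X (A.Xᘁ)).hom ≫ ε_ A.X (A.Xᘁ)

/-- An algebra object is étale if its trace form `ε_A ∘ μ` is a perfect pairing. -/
noncomputable def IsEtale (A : CommMon C) : Prop :=
  IsPerfectPairing A.X ((MonObj.mul (X := A.X)) ≫ traceMap A)

/-- The categorical dimension of `X`, as an endomorphism of the unit object:
the composite of coevaluation, symmetry and evaluation. -/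
noncomputable def dimMor (X : C) : 𝟙_ C ⟶ 𝟙_ C :=
  η_ X (Xᘁ) ≫ (β_ X (Xᘁ)).hom ≫ ε_ X (Xᘁ)

/-- A category is semisimple if every object is a finite direct sum of simple objects. -/
def IsSemisimpleCategory : Prop :=
  haveI : HasFiniteBiproducts C := Abelian.hasFiniteBiproducts
  ∀ X : C, ∃ (n : ℕ) (f : Fin n → C), (∀ i, Simple (f i)) ∧ Nonempty (X ≅ ⨁ f)

end

/-!
For `x : 𝟙 ⟶ A`, right multiplication by `x` is an `A`-linear endomorphism of `A`, so its image
is an ideal. If `x ≠ 0` this image is all of `A`, and an epimorphic endomorphism with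
finite-dimensional endomorphism algebra is invertible. As `k` is algebraically closed, the
operator `y ↦ y · x` on `Hom(𝟙, A)` has an eigenvector `y` with eigenvalue `c`; right
multiplication by `x - c · 1` kills `y`, so it is not invertible, whence `x = c · 1`.
-/

open scoped MonObj

namespace CategoryTheory.MonObj

variable {k : Type*} [Field k] {C : Type*} [Category C] [Preadditive C] [Linear k C]
  [MonoidalCategory C] [MonoidalPreadditive C] [MonoidalLinear k C] {M : C} [MonObj M]

lemma one_ne_zero_of_not_isZero (hM : ¬ IsZero M) : η[M] ≠ 0 := by
  intro h
  refine hM ((IsZero.iff_id_eq_zero M).2 ?_)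
  rw [← Iso.inv_hom_id_assoc (λ_ M) (𝟙 M), ← one_mul, h]
  simp

variable (k M) in
noncomputable def mulRight : (𝟙_ C ⟶ M) →ₗ[k] (M ⟶ M) where
  toFun x := (ρ_ M).inv ≫ (M ◁ x) ≫ μ
  map_add' x y := by simp [Preadditive.add_comp, Preadditive.comp_add]
  map_smul' c x := by simp

lemma one_comp_mulRight (x : 𝟙_ C ⟶ M) : η ≫ mulRight k M x = x := by
  rw [mulRight, LinearMap.coe_mk, AddHom.coe_mk, rightUnitor_inv_naturality_assoc,
    ← whisker_exchange_assoc, one_mul, leftUnitor_naturality, unitors_equal,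
    Iso.inv_hom_id_assoc]

lemma mulRight_one : mulRight k M η = 𝟙 M := by
  simp [mulRight]

lemma whiskerLeft_mulRight_comp_mul (x : 𝟙_ C ⟶ M) :
    M ◁ mulRight k M x ≫ μ = μ ≫ mulRight k M x := by
  simp only [mulRight, LinearMap.coe_mk, AddHom.coe_mk, whiskerLeft_comp, Category.assoc]
  rw [mul_assoc_flip, associator_inv_naturality_right_assoc,
    whiskerLeft_rightUnitor_inv_assoc, rightUnitor_inv_naturality_assoc,
    ← whisker_exchange_assoc]
  simp

end CategoryTheory.MonObj

theorem CategoryTheory.isIso_of_epi_of_finiteDimensional_end (k : Type*) [Field k]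
    {C : Type*} [Category C] [Preadditive C] [Linear k C] {X : C}
    [FiniteDimensional k (X ⟶ X)] (f : X ⟶ X) [Epi f] : IsIso f := by
  have hinj : Function.Injective (Linear.leftComp k X f) := fun a b hab => (cancel_epi f).1 hab
  obtain ⟨g, hg⟩ := LinearMap.injective_iff_surjective.1 hinj (𝟙 X)
  have : IsSplitMono f := IsSplitMono.mk' ⟨g, hg⟩
  exact isIso_of_epi_of_isSplitMono f

lemma isIdeal_imageSubobject {C : Type*} [Category C] [Abelian C] [MonoidalCategory C]
    [SymmetricCategory C] {A : CommMon C} [HasLeftDual A.X] (f : A.X ⟶ A.X)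
    (hf : A.X ◁ f ≫ μ = μ ≫ f) : IsIdeal A (imageSubobject f) := by
  set e := factorThruImageSubobject f
  set m := (imageSubobject f).arrow
  have : (tensorLeft A.X).IsLeftAdjoint := ⟨_, ⟨tensorLeftAdjunction (ᘁA.X) A.X⟩⟩
  have : Epi (A.X ◁ e) := (tensorLeft A.X).map_epi e
  have : StrongEpi (A.X ◁ e) := strongEpi_of_epi _
  have sq : CommSq (μ ≫ e) (A.X ◁ e) m (A.X ◁ m ≫ μ) := ⟨by
    simp only [Category.assoc, m, e, imageSubobject_arrow_comp, ← whiskerLeft_comp_assoc, hf]⟩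
  exact (Subobject.factors_iff _ _).2 ⟨sq.lift, sq.fac_right⟩

section SimpleAlgebra

variable {k : Type*} [Field k] {C : Type*} [Category C] [Abelian C] [Linear k C]
  [MonoidalCategory C] [MonoidalPreadditive C] [MonoidalLinear k C] [SymmetricCategory C]
  {A : CommMon C}

open MonObj

lemma IsSimpleAlgebra.isIso_mulRight [HasLeftDual A.X] [FiniteDimensional k (A.X ⟶ A.X)]
    (hA : IsSimpleAlgebra A) {x : 𝟙_ C ⟶ A.X} (hx : x ≠ 0) : IsIso (mulRight k A.X x) := by
  set f := mulRight k A.X x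
  rcases hA.2 _ (isIdeal_imageSubobject f (whiskerLeft_mulRight_comp_mul x)) with h | h
  · have hf : mulRight k A.X x = 0 := (Subobject.bot_factors_iff_zero f).1 <| by
      simpa [h] using imageSubobject_factors_comp_self f (𝟙 _)
    refine absurd ?_ hx
    rw [← one_comp_mulRight (k := k) x, hf, comp_zero]
  · have : IsIso (imageSubobject f).arrow := (Subobject.isIso_arrow_iff_eq_top _).2 h
    have : Epi f := by rw [← imageSubobject_arrow_comp f]; infer_instance
    exact isIso_of_epi_of_finiteDimensional_end k f

lemma IsSimpleAlgebra.exists_smul_one_eq [IsAlgClosed k] [HasLeftDual A.X]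
    [FiniteDimensional k (𝟙_ C ⟶ A.X)] [FiniteDimensional k (A.X ⟶ A.X)]
    (hA : IsSimpleAlgebra A) (x : 𝟙_ C ⟶ A.X) : ∃ c : k, c • η[A.X] = x := by
  have := nontrivial_of_ne _ _ (one_ne_zero_of_not_isZero hA.1)
  obtain ⟨c, hc⟩ := Module.End.exists_eigenvalue (Linear.rightComp k (𝟙_ C) (mulRight k A.X x))
  obtain ⟨y, hy⟩ := hc.exists_hasEigenvector
  refine ⟨c, (sub_eq_zero.1 ?_).symm⟩
  by_contra hne
  have := hA.isIso_mulRight (k := k) hne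
  refine hy.2 ((cancel_mono (mulRight k A.X (x - c • η))).1 ?_)
  have hyx : y ≫ mulRight k A.X x = c • y := hy.apply_eq_smul
  rw [map_sub, map_smul, mulRight_one, Preadditive.comp_sub, Linear.comp_smul, Category.comp_id,
    hyx, sub_self, zero_comp]

end SimpleAlgebra

theorem stmt_1_general {k : Type*} [Field k] [IsAlgClosed k]
    {C : Type*} [Category C] [Abelian C] [Linear k C]
    [MonoidalCategory C] [MonoidalPreadditive C] [MonoidalLinear k C]
    [SymmetricCategory C] [RigidCategory C]
    (hfin : ∀ X Y : C, FiniteDimensional k (X ⟶ Y))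
    (A : CommMon C) (hA : IsSimpleAlgebra A) :
    Module.finrank k (𝟙_ C ⟶ A.X) = 1 := by
  have hone := MonObj.one_ne_zero_of_not_isZero hA.1
  have := hfin (𝟙_ C) A.X
  have := hfin A.X A.X
  rw [finrank_eq_one_iff_of_nonzero' η[A.X] hone]
  exact hA.exists_smul_one_eq

/-- Let `k` be an algebraically closed field, let `𝔗` be a semisimple
pre-Tannakian category over `k`, and let `A` be a simple algebra in `𝔗`. Then the unit
object `𝟙` appears in `A` with multiplicity one; equivalently, `Hom(𝟙, A)` is
one-dimensional over `k`. -/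
theorem stmt_1 {k : Type*} [Field k] [IsAlgClosed k]
    {C : Type*} [Category C] [Abelian C] [Linear k C]
    [MonoidalCategory C] [MonoidalPreadditive C] [MonoidalLinear k C]
    [SymmetricCategory C] [RigidCategory C]
    (hlen : ∀ X : C, WellFoundedGT (Subobject X) ∧ WellFoundedLT (Subobject X))
    (hfin : ∀ X Y : C, FiniteDimensional k (X ⟶ Y))
    (hunit : Function.Bijective fun a : k => a • 𝟙 (𝟙_ C))
    (hss : IsSemisimpleCategory (C := C))
    (A : CommMon C) (hA : IsSimpleAlgebra A) :
    Module.finrank k (𝟙_ C ⟶ A.X) = 1 :=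
  stmt_1_general hfin A hA
end

section
/- Let 𝔗 be a semisimple pre-Tannakian category over a field k and let A be a simple algebra in 𝔗. Then there exists a morphism λ : A → 𝟙 such that (A, λ) is a Frobenius algebra. -/
open CategoryTheory CategoryTheory.Limits CategoryTheory.MonoidalCategory

/-!
Semisimplicity gives `λ : A ⟶ 𝟙` with `λ ∘ η ≠ 0`, since the unit `η : 𝟙 ⟶ A` of the nonzero
algebra `A` is nonzero. By associativity and commutativity, the kernel of the map `A ⟶ Aᘁ`
induced by the form `λ ∘ μ` is an ideal; it is not all of `A`, for then the form would vanish and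
force `λ = 0`. As `A` is simple, the map is a monomorphism, and transposing along the duality
shows that a monomorphism coming from a symmetric form is also an epimorphism.
-/

open scoped MonObj

lemma tensorRightHomEquiv_zero {C : Type*} [Category C] [Preadditive C] [MonoidalCategory C]
    [MonoidalPreadditive C] (X Y Y' Z : C) [ExactPairing Y Y'] :
    tensorRightHomEquiv X Y Y' Z 0 = 0 := by
  simp [tensorRightHomEquiv]

section Duality

variable {C : Type*} [Category C] [MonoidalCategory C] [RigidCategory C]

lemma pairingHom_whiskerRight_comp_evaluation {A : C} (f : A ⊗ A ⟶ 𝟙_ C) :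
    pairingHom A f ▷ A ≫ ε_ A Aᘁ = f := by
  apply (tensorRightHomEquiv A A Aᘁ (𝟙_ C)).injective
  rw [tensorRightHomEquiv_whiskerRight_comp_evaluation, pairingHom, Category.assoc,
    Iso.hom_inv_id, Category.comp_id]

lemma whiskerLeft_pairingHom_comp_braiding_comp_evaluation [BraidedCategory C] {A : C}
    {B : A ⊗ A ⟶ 𝟙_ C} (hB : (β_ A A).hom ≫ B = B) :
    A ◁ pairingHom A B ≫ (β_ A Aᘁ).hom ≫ ε_ A Aᘁ = pairingHom A B ▷ A ≫ ε_ A Aᘁ := by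
  rw [BraidedCategory.braiding_naturality_right_assoc, pairingHom_whiskerRight_comp_evaluation, hB]

variable [Preadditive C] [MonoidalPreadditive C]

lemma eq_zero_of_whiskerRight_comp_evaluation_eq_zero {W A : C} {g : W ⟶ Aᘁ}
    (h : g ▷ A ≫ ε_ A Aᘁ = 0) : g = 0 := by
  have h' := congrArg (tensorRightHomEquiv W A Aᘁ (𝟙_ C)) h
  rw [tensorRightHomEquiv_whiskerRight_comp_evaluation, tensorRightHomEquiv_zero] at h'
  simpa using h'

lemma comp_pairingHom_eq_zero_iff {W A : C} (p : W ⟶ A) (f : A ⊗ A ⟶ 𝟙_ C) :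
    p ≫ pairingHom A f = 0 ↔ p ▷ A ≫ f = 0 := by
  have hp : (p ≫ pairingHom A f) ▷ A ≫ ε_ A Aᘁ = p ▷ A ≫ f := by
    rw [comp_whiskerRight, Category.assoc, pairingHom_whiskerRight_comp_evaluation]
  refine ⟨fun h => ?_, fun h => eq_zero_of_whiskerRight_comp_evaluation_eq_zero (hp ▸ h)⟩
  simp [← hp, h]

lemma epi_pairingHom_of_mono [BraidedCategory C] {A : C} {B : A ⊗ A ⟶ 𝟙_ C}
    (hB : (β_ A A).hom ≫ B = B) [Mono (pairingHom A B)] : Epi (pairingHom A B) := by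
  set φ := pairingHom A B
  refine Preadditive.epi_of_cancel_zero _ fun {Z} g hg => ?_
  let : ExactPairing Aᘁ A := BraidedCategory.exactPairing_swap A Aᘁ
  have : Mono (φ ▷ Z) :=
    (Functor.preservesMonomorphisms_of_adjunction (tensorRightAdjunction ᘁZ Z)).preserves φ
  let gt : 𝟙_ C ⟶ A ⊗ Z := tensorLeftHomEquiv (𝟙_ C) A Aᘁ Z ((ρ_ Aᘁ).hom ≫ g)
  have hsymm : A ◁ φ ≫ ε_ Aᘁ A = φ ▷ A ≫ ε_ A Aᘁ :=
    whiskerLeft_pairingHom_comp_braiding_comp_evaluation hB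
  -- Since the form is symmetric, transposition turns postcomposition with `φ ▷ Z` into
  -- precomposition with `φ`.
  have htranspose :
      (tensorLeftHomEquiv (𝟙_ C) Aᘁ A Z).symm (gt ≫ φ ▷ Z) = (ρ_ A).hom ≫ φ ≫ g := by
    have hgt : (tensorLeftHomEquiv (𝟙_ C) A Aᘁ Z).symm gt = (ρ_ Aᘁ).hom ≫ g :=
      Equiv.symm_apply_apply _ _
    simp only [tensorLeftHomEquiv, Equiv.coe_fn_symm_mk] at hgt ⊢
    calc A ◁ (gt ≫ φ ▷ Z) ≫ (α_ A Aᘁ Z).inv ≫ ε_ Aᘁ A ▷ Z ≫ (λ_ Z).hom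
        = A ◁ gt ≫ (α_ A A Z).inv ≫ (A ◁ φ ≫ ε_ Aᘁ A) ▷ Z ≫ (λ_ Z).hom := by
          rw [MonoidalCategory.whiskerLeft_comp_assoc, associator_inv_naturality_middle_assoc]
          simp only [comp_whiskerRight, Category.assoc]
      _ = A ◁ gt ≫ (α_ A A Z).inv ≫ (φ ▷ A) ▷ Z ≫ ε_ A Aᘁ ▷ Z ≫ (λ_ Z).hom := by
          rw [hsymm, comp_whiskerRight, Category.assoc]
      _ = φ ▷ 𝟙_ C ≫ Aᘁ ◁ gt ≫ (α_ Aᘁ A Z).inv ≫ ε_ A Aᘁ ▷ Z ≫ (λ_ Z).hom := by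
          rw [← associator_inv_naturality_left_assoc, whisker_exchange_assoc]
      _ = (ρ_ A).hom ≫ φ ≫ g := by
          rw [hgt, MonoidalCategory.rightUnitor_naturality_assoc]
  have hgt : gt = 0 := by
    rw [← cancel_mono (φ ▷ Z), zero_comp]
    apply (tensorLeftHomEquiv (𝟙_ C) Aᘁ A Z).symm.injective
    rw [htranspose, hg, comp_zero]
    simp [tensorLeftHomEquiv]
  have h := congrArg (tensorLeftHomEquiv (𝟙_ C) A Aᘁ Z).symm hgt
  rw [Equiv.symm_apply_apply] at h
  simpa [tensorLeftHomEquiv] using h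

end Duality

section SimpleAlgebra

variable {C : Type*} [Category C] [Abelian C] [MonoidalCategory C] [SymmetricCategory C]

lemma eq_zero_of_mul_comp_eq_zero {A : CommMon C} {lam : A.X ⟶ 𝟙_ C} (h : μ[A.X] ≫ lam = 0) :
    lam = 0 :=
  calc lam = (λ_ A.X).inv ≫ (η[A.X] ▷ A.X ≫ μ[A.X]) ≫ lam := by
        rw [MonObj.one_mul, Iso.inv_hom_id_assoc]
    _ = 0 := by rw [Category.assoc, h, comp_zero, comp_zero]

/-- The radical of the form `λ ∘ μ` is stable under multiplication by `A`. -/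
lemma mul_whiskerRight_comp_mul_comp_eq_zero (A : CommMon C) (lam : A.X ⟶ 𝟙_ C) {W : C}
    (κ : W ⟶ A.X) (hκ : κ ▷ A.X ≫ μ[A.X] ≫ lam = 0) :
    (A.X ◁ κ ≫ μ[A.X]) ▷ A.X ≫ μ[A.X] ≫ lam = 0 := by
  have hcomm : A.X ◁ κ ≫ μ[A.X] = (β_ A.X W).hom ≫ κ ▷ A.X ≫ μ[A.X] := by
    rw [← BraidedCategory.braiding_naturality_right_assoc, IsCommMonObj.mul_comm]
  have hassoc : (κ ▷ A.X ≫ μ[A.X]) ▷ A.X ≫ μ[A.X] ≫ lam = 0 := by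
    rw [comp_whiskerRight, Category.assoc, MonObj.mul_assoc_assoc, associator_naturality_left_assoc,
      ← whisker_exchange_assoc, hκ, comp_zero, comp_zero]
  rw [hcomm, comp_whiskerRight, Category.assoc, hassoc, comp_zero]

variable [MonoidalPreadditive C]

lemma one_ne_zero_of_not_isZero {A : CommMon C} (hA : ¬IsZero A.X) : η[A.X] ≠ 0 := by
  intro h
  refine hA ((IsZero.iff_id_eq_zero _).mpr ?_)
  calc 𝟙 A.X = (λ_ A.X).inv ≫ η[A.X] ▷ A.X ≫ μ[A.X] := by rw [MonObj.one_mul, Iso.inv_hom_id]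
    _ = 0 := by rw [h, MonoidalPreadditive.zero_whiskerRight, zero_comp, comp_zero]

variable [RigidCategory C]

lemma isIdeal_kernelSubobject_pairingHom (A : CommMon C) (lam : A.X ⟶ 𝟙_ C) :
    IsIdeal A (kernelSubobject (pairingHom A.X (μ[A.X] ≫ lam))) := by
  apply kernelSubobject_factors
  rw [comp_pairingHom_eq_zero_iff]
  apply mul_whiskerRight_comp_mul_comp_eq_zero
  rw [← comp_pairingHom_eq_zero_iff]
  exact kernelSubobject_arrow_comp _

end SimpleAlgebra

lemma exists_comp_ne_zero_of_isSemisimpleCategory {C : Type*} [Category C] [Abelian C]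
    (hss : IsSemisimpleCategory (C := C)) {X Y : C} {f : X ⟶ Y} (hf : f ≠ 0) :
    ∃ g : Y ⟶ X, f ≫ g ≠ 0 := by
  have : HasFiniteBiproducts C := Abelian.hasFiniteBiproducts
  obtain ⟨m, S, hS, ⟨eX⟩⟩ := hss X
  obtain ⟨n, T, hT, ⟨eY⟩⟩ := hss Y
  obtain ⟨j, hj⟩ : ∃ j, f ≫ eY.hom ≫ biproduct.π T j ≠ 0 := by
    by_contra! h
    exact hf (by rw [← cancel_mono eY.hom]; ext j; simpa using h j)
  obtain ⟨i, hi⟩ : ∃ i, (biproduct.ι S i ≫ eX.inv) ≫ f ≫ eY.hom ≫ biproduct.π T j ≠ 0 := by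
    by_contra! h
    exact hj (by rw [← cancel_epi eX.inv]; ext i; simpa using h i)
  set incl := biproduct.ι S i ≫ eX.inv
  set φ := incl ≫ f ≫ eY.hom ≫ biproduct.π T j
  have := hS i
  have := hT j
  have := isIso_of_hom_simple hi
  -- `φ : S i ⟶ T j` is an isomorphism by Schur's lemma, so `incl` factors through `f`.
  refine ⟨eY.hom ≫ biproduct.π T j ≫ inv φ ≫ incl, fun h => Simple.not_isZero (S i)
    (IsZero.of_mono_eq_zero incl ?_)⟩
  calc incl = φ ≫ inv φ ≫ incl := (IsIso.hom_inv_id_assoc φ incl).symm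
    _ = incl ≫ f ≫ eY.hom ≫ biproduct.π T j ≫ inv φ ≫ incl := by simp only [φ, Category.assoc]
    _ = 0 := by rw [h, comp_zero]

theorem stmt_3_general
    {C : Type*} [Category C] [Abelian C]
    [MonoidalCategory C] [MonoidalPreadditive C]
    [SymmetricCategory C] [RigidCategory C]
    (hss : IsSemisimpleCategory (C := C))
    (A : CommMon C) (hA : IsSimpleAlgebra A) :
    ∃ lam : A.X ⟶ 𝟙_ C, IsPerfectPairing A.X ((MonObj.mul (X := A.X)) ≫ lam) := by
  obtain ⟨lam, hlam⟩ :=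
    exists_comp_ne_zero_of_isSemisimpleCategory hss (one_ne_zero_of_not_isZero hA.1)
  refine ⟨lam, ?_⟩
  set φ := pairingHom A.X (μ[A.X] ≫ lam)
  rcases hA.2 _ (isIdeal_kernelSubobject_pairingHom A lam) with hbot | htop
  · have : Mono φ := Preadditive.mono_of_cancel_zero _ fun g hg =>
      (Subobject.bot_factors_iff_zero g).mp (hbot ▸ kernelSubobject_factors φ g hg)
    have : Epi φ := epi_pairingHom_of_mono (IsCommMonObj.mul_comm_assoc A.X lam)
    exact isIso_of_mono_of_epi φ
  · have hφ : 𝟙 A.X ≫ φ = 0 :=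
      (kernelSubobject_factors_iff φ (𝟙 _)).mp (htop ▸ Subobject.top_factors _)
    rw [comp_pairingHom_eq_zero_iff, id_whiskerRight, Category.id_comp] at hφ
    exact absurd (eq_zero_of_mul_comp_eq_zero hφ) (by rintro rfl; exact hlam comp_zero)

/-- Let `𝔗` be a semisimple pre-Tannakian category over a field `k` and
let `A` be a simple algebra in `𝔗`. Then there exists a morphism `λ : A → 𝟙` such that
`(A, λ)` is a Frobenius algebra, i.e. the form `λ ∘ μ : A ⊗ A ⟶ 𝟙` is perfect. -/
theorem stmt_3 {k : Type*} [Field k]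
    {C : Type*} [Category C] [Abelian C] [Linear k C]
    [MonoidalCategory C] [MonoidalPreadditive C] [MonoidalLinear k C]
    [SymmetricCategory C] [RigidCategory C]
    (hlen : ∀ X : C, WellFoundedGT (Subobject X) ∧ WellFoundedLT (Subobject X))
    (hfin : ∀ X Y : C, FiniteDimensional k (X ⟶ Y))
    (hunit : Function.Bijective fun a : k => a • 𝟙 (𝟙_ C))
    (hss : IsSemisimpleCategory (C := C))
    (A : CommMon C) (hA : IsSimpleAlgebra A) :
    ∃ lam : A.X ⟶ 𝟙_ C, IsPerfectPairing A.X ((MonObj.mul (X := A.X)) ≫ lam) :=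
  stmt_3_general hss A hA
end
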